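/- Let r ≥ 4 be an integer, let P ∈ ℂ[x₁,x₂,x₃] be an irreducible homogeneous polynomial of degree r, and let v = v₁x₁ + v₂x₂ + v₃x₃ be a nonzero linear form. Then v = 0 is an undulation line of the curve P = 0 if and only if there exist a linear form u = u₁x₁ + u₂x₂ + u₃x₃ and homogeneous polynomials h, w ∈ ℂ[x₁,x₂,x₃] of degrees r−4 and r−1 respectively such that P = u⁴·h + v·w. -/

import Mathlib

open MvPolynomial

/-- The linear form `v₁x₁ + v₂x₂ + v₃x₃` associated to a coefficient vector `v`. -/
noncomputable def linForm (v : Fin 3 → ℂ) : MvPolynomial (Fin 3) ℂ :=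
  ∑ i, C (v i) * X i

/-- The binary form `q(s,t) = P(sA + tB)` obtained by restricting `P` to the plane
spanned by `A` and `B`. -/
noncomputable def binaryRestrict (P : MvPolynomial (Fin 3) ℂ) (A B : Fin 3 → ℂ) :
    MvPolynomial (Fin 2) ℂ :=
  aeval (fun i => (C (A i) * X 0 + C (B i) * X 1 : MvPolynomial (Fin 2) ℂ)) P

/-- `v₁x₁ + v₂x₂ + v₃x₃ = 0` is an undulation line of the curve `P = 0`. -/
def IsUndulationLine (P : MvPolynomial (Fin 3) ℂ) (v : Fin 3 → ℂ) : Prop :=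
  v ≠ 0 ∧ ∃ A B : Fin 3 → ℂ, LinearIndependent ℂ ![A, B] ∧
    (∑ i, v i * A i) = 0 ∧ (∑ i, v i * B i) = 0 ∧
    ∃ L : MvPolynomial (Fin 2) ℂ, L ≠ 0 ∧ L.IsHomogeneous 1 ∧
      L ^ 4 ∣ binaryRestrict P A B

/-- The curve `P = 0` has an undulation point. -/
def HasUndulationPoint (P : MvPolynomial (Fin 3) ℂ) : Prop :=
  ∃ v : Fin 3 → ℂ, IsUndulationLine P v

/-!
Complete `A, B` by a vector `C` with `v ⬝ᵥ C = 1`. In the coordinates dual to the frame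
`(C, A, B)` the line `v = 0` becomes `y₀ = 0` and restriction to it becomes `y₀ ↦ 0`. Hence a
form vanishes on the line iff `v` divides it, and every binary form lifts to a ternary form of the
same degree. If `P(sA + tB) = L⁴H`, lifting `L` to `u` and `H` to `h` makes `P - u⁴h` vanish on
the line, so `P = u⁴h + vw`. Conversely such a decomposition restricts to `(u|)⁴ · h|`, and
`u| ≠ 0` since otherwise `v ∣ P`, which irreducibility forbids once `r ≥ 2`.
-/

open Matrix

namespace MvPolynomial

section LinearSubstitution

variable {R : Type*} [CommSemiring R] {σ τ υ : Type*} [Fintype τ]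

noncomputable def linSubst (M : Matrix σ τ R) : MvPolynomial σ R →ₐ[R] MvPolynomial τ R :=
  bind₁ fun i => ∑ j, C (M i j) * X j

lemma linSubst_X (M : Matrix σ τ R) (i : σ) : linSubst M (X i) = ∑ j, C (M i j) * X j :=
  bind₁_X_right _ _

lemma linSubst_linSubst [Fintype υ] (M : Matrix σ τ R) (N : Matrix τ υ R)
    (p : MvPolynomial σ R) : linSubst N (linSubst M p) = linSubst (M * N) p := by
  rw [linSubst, linSubst, linSubst, bind₁_bind₁]
  congr 2
  funext i
  simp only [map_sum, map_mul, bind₁_C_right, bind₁_X_right, Finset.mul_sum, mul_apply, map_sum,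
    Finset.sum_mul, mul_assoc]
  exact Finset.sum_comm

lemma linSubst_one [DecidableEq τ] (p : MvPolynomial τ R) : linSubst (1 : Matrix τ τ R) p = p := by
  simp [linSubst, one_apply, apply_ite C]

lemma IsHomogeneous.linSubst {p : MvPolynomial σ R} {n : ℕ} (hp : p.IsHomogeneous n)
    (M : Matrix σ τ R) : (linSubst M p).IsHomogeneous n := by
  have h := hp.aeval (fun i => ∑ j, C (M i j) * X j) fun i =>
    IsHomogeneous.sum _ _ _ fun j _ => isHomogeneous_C_mul_X (M i j) j
  rwa [one_mul] at h

end LinearSubstitution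

lemma X_zero_dvd_of_aeval_cons_zero {R : Type*} [CommRing R] {n : ℕ}
    {q : MvPolynomial (Fin (n + 1)) R}
    (hq : aeval (Fin.cons 0 X : Fin (n + 1) → MvPolynomial (Fin n) R) q = 0) : X 0 ∣ q := by
  set I := Ideal.span {(X 0 : MvPolynomial (Fin (n + 1)) R)}
  -- substituting `X 0 ↦ 0` is the identity modulo `(X 0)`
  have hmod : (Ideal.Quotient.mkₐ R I).comp ((rename Fin.succ).comp
      (aeval (Fin.cons 0 X : Fin (n + 1) → MvPolynomial (Fin n) R))) = Ideal.Quotient.mkₐ R I := by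
    ext i
    refine Fin.cases ?_ (fun j => ?_) i
    · simp only [AlgHom.comp_apply, aeval_X, Fin.cons_zero, map_zero, Ideal.Quotient.mkₐ_eq_mk]
      exact (Ideal.Quotient.eq_zero_iff_mem.mpr (Ideal.mem_span_singleton_self _)).symm
    · simp
  have hmodq := DFunLike.congr_fun hmod q
  simp only [AlgHom.comp_apply, hq, map_zero, Ideal.Quotient.mkₐ_eq_mk] at hmodq
  exact Ideal.mem_span_singleton.mp (Ideal.Quotient.eq_zero_iff_mem.mp hmodq.symm)

section Homogeneous

variable {R σ : Type*}

attribute [local instance] MvPolynomial.gradedAlgebra in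
lemma homogeneousComponent_add_mul_of_isHomogeneous_left [CommSemiring R]
    {φ : MvPolynomial σ R} {m : ℕ} (hφ : φ.IsHomogeneous m) (k : ℕ) (ψ : MvPolynomial σ R) :
    homogeneousComponent (m + k) (φ * ψ) = φ * homogeneousComponent k ψ := by
  have := DirectSum.coe_decompose_mul_of_left_mem_of_le (homogeneousSubmodule σ R) (b := ψ)
    (mem_homogeneousSubmodule m φ |>.mpr hφ) (Nat.le_add_right m k)
  have hdec : ∀ (p : MvPolynomial σ R) (j : ℕ),
      (DirectSum.decompose (homogeneousSubmodule σ R) p j : MvPolynomial σ R)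
        = homogeneousComponent j p :=
    decomposition.decompose'_apply
  rwa [hdec, hdec, Nat.add_sub_cancel_left] at this

lemma IsHomogeneous.of_mul_left [CommRing R] [IsDomain R] {φ ψ : MvPolynomial σ R} {m n : ℕ}
    (hφ : φ.IsHomogeneous m) (hφ0 : φ ≠ 0) (h : (φ * ψ).IsHomogeneous n) :
    ψ.IsHomogeneous (n - m) := by
  intro d hd
  have hcomp : homogeneousComponent (m + d.degree) (φ * ψ) ≠ 0 := by
    rw [homogeneousComponent_add_mul_of_isHomogeneous_left hφ]
    refine mul_ne_zero hφ0 fun h0 => hd ?_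
    simpa [coeff_homogeneousComponent] using congr_arg (coeff d) h0
  have : m + d.degree = n := by
    by_contra hne
    rw [homogeneousComponent_of_mem ((mem_homogeneousSubmodule n _).mpr h), if_neg hne] at hcomp
    exact hcomp rfl
  rw [Pi.one_def, ← Finsupp.degree_eq_weight_one]
  omega

lemma IsHomogeneous.not_isUnit [CommRing R] [IsDomain R] {p : MvPolynomial σ R} {n : ℕ}
    (hp : p.IsHomogeneous n) (hn : n ≠ 0) : ¬IsUnit p := by
  intro hu
  exact hn ((hp.totalDegree hu.ne_zero).symm.trans (isUnit_iff_totalDegree_of_isReduced.mp hu).2)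

lemma IsHomogeneous.eq_sum_C_coeff_mul_X [CommSemiring R] [Fintype σ] [DecidableEq σ]
    {p : MvPolynomial σ R} (hp : p.IsHomogeneous 1) :
    p = ∑ i, C (p.coeff (Finsupp.single i 1)) * X i := by
  ext d
  simp only [coeff_sum, coeff_C_mul, coeff_X]
  by_cases hd : d.degree = 1
  · obtain ⟨i, rfl⟩ : d ∈ Set.range fun i => Finsupp.single i 1 := Finsupp.range_single_one ▸ hd
    simp [Finsupp.single_left_inj]
  · rw [hp.coeff_eq_zero hd, Finset.sum_eq_zero]
    rintro i -
    rw [if_neg (by rintro rfl; simp at hd), mul_zero]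

end Homogeneous

end MvPolynomial

lemma LinearIndependent.finCons_of_dotProduct {K ι : Type*} [Field K] [Fintype ι] {n : ℕ}
    {w : Fin n → ι → K} (hw : LinearIndependent K w) {v C : ι → K} (hvw : ∀ i, v ⬝ᵥ w i = 0)
    (hvC : v ⬝ᵥ C ≠ 0) : LinearIndependent K (Fin.cons C w : Fin (n + 1) → ι → K) := by
  classical
  refine hw.finCons fun hC => hvC ?_
  have hle : Submodule.span K (Set.range w) ≤ LinearMap.ker (dotProductEquiv K ι v) :=
    Submodule.span_le.mpr <| Set.range_subset_iff.mpr hvw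
  exact hle hC

lemma exists_linearIndependent_pair_dotProduct_eq_zero {K : Type*} [Field K] {v : Fin 3 → K}
    (hv : v ≠ 0) : ∃ A B : Fin 3 → K, LinearIndependent K ![A, B] ∧ v ⬝ᵥ A = 0 ∧ v ⬝ᵥ B = 0 := by
  set f := dotProductEquiv K (Fin 3) v
  have hf : f ≠ 0 := (LinearEquiv.map_ne_zero_iff _).mpr hv
  have hker : Module.finrank K (LinearMap.ker f) = 2 := by
    have := f.finrank_ker_add_one_of_ne_zero hf
    simp only [Module.finrank_fin_fun] at this
    omega
  let b := Module.finBasisOfFinrankEq K _ hker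
  refine ⟨b 0, b 1, ?_, (b 0).2, (b 1).2⟩
  have hAB : ![(b 0 : Fin 3 → K), b 1] = (LinearMap.ker f).subtype ∘ b := by
    ext i : 1
    fin_cases i <;> rfl
  rw [hAB]
  exact b.linearIndependent.map' _ (LinearMap.ker f).ker_subtype

lemma binaryRestrict_eq_aeval_linSubst (C A B : Fin 3 → ℂ) (g : MvPolynomial (Fin 3) ℂ) :
    binaryRestrict g A B
      = aeval (Fin.cons 0 X : Fin 3 → MvPolynomial (Fin 2) ℂ) (linSubst (of ![C, A, B])ᵀ g) := by
  rw [binaryRestrict, linSubst, aeval_bind₁]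
  congr 2
  funext i
  have h2 : (Fin.cons 0 X : Fin 3 → MvPolynomial (Fin 2) ℂ) 2 = X 1 := rfl
  simp [Fin.sum_univ_three, h2]

/-- `M` has columns `C, A, B` for some `C` with `v ⬝ᵥ C = 1`; in the coordinates `y = N x` the
line `v = 0` is `y₀ = 0`. -/
lemma exists_frame {A B v : Fin 3 → ℂ} (hAB : LinearIndependent ℂ ![A, B])
    (hvA : v ⬝ᵥ A = 0) (hvB : v ⬝ᵥ B = 0) (hv : v ≠ 0) :
    ∃ M N : Matrix (Fin 3) (Fin 3) ℂ, M * N = 1 ∧ N * M = 1 ∧ N 0 = v ∧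
      ∀ g, binaryRestrict g A B = aeval (Fin.cons 0 X : Fin 3 → MvPolynomial (Fin 2) ℂ)
        (linSubst M g) := by
  obtain ⟨C, hvC⟩ : ∃ C, v ⬝ᵥ C = 1 := LinearMap.surjective
    ((LinearEquiv.map_ne_zero_iff _).mpr hv : dotProductEquiv ℂ (Fin 3) v ≠ 0) 1
  set M : Matrix (Fin 3) (Fin 3) ℂ := (of ![C, A, B])ᵀ
  have hCAB : LinearIndependent ℂ ![C, A, B] := hAB.finCons_of_dotProduct
    (fun i => by fin_cases i <;> assumption) (by rw [hvC]; exact one_ne_zero)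
  have hM : IsUnit M.det := (isUnit_iff_isUnit_det M).mp <|
    (isUnit_transpose _).mpr (linearIndependent_rows_iff_isUnit.mp hCAB)
  have hvM : v ᵥ* M = Pi.single 0 1 := by
    rw [vecMul_transpose]
    ext i
    fin_cases i <;> simp [dotProduct_comm _ v, hvA, hvB, hvC]
  refine ⟨M, M⁻¹, mul_nonsing_inv M hM, nonsing_inv_mul M hM, ?_,
    binaryRestrict_eq_aeval_linSubst C A B⟩
  calc M⁻¹ 0 = Pi.single 0 1 ᵥ* M⁻¹ := by rw [single_one_vecMul]; rfl
    _ = v := by rw [← hvM, vecMul_vecMul, mul_nonsing_inv M hM, vecMul_one]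

lemma coeff_single_linForm (v : Fin 3 → ℂ) (i : Fin 3) :
    (linForm v).coeff (Finsupp.single i 1) = v i := by
  simp [linForm, coeff_sum, coeff_C_mul, coeff_X, Finsupp.single_left_inj]

lemma linForm_ne_zero {v : Fin 3 → ℂ} (hv : v ≠ 0) : linForm v ≠ 0 := fun h =>
  hv <| funext fun i => by simpa [h] using (coeff_single_linForm v i).symm

lemma isHomogeneous_linForm (v : Fin 3 → ℂ) : (linForm v).IsHomogeneous 1 :=
  IsHomogeneous.sum _ _ _ fun i _ => isHomogeneous_C_mul_X _ i

lemma binaryRestrict_linForm (v A B : Fin 3 → ℂ) :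
    binaryRestrict (linForm v) A B = C (v ⬝ᵥ A) * X 0 + C (v ⬝ᵥ B) * X 1 := by
  simp [binaryRestrict, linForm, dotProduct, mul_add, Finset.sum_add_distrib, Finset.sum_mul,
    mul_assoc]

lemma MvPolynomial.IsHomogeneous.binaryRestrict {P : MvPolynomial (Fin 3) ℂ} {n : ℕ}
    (hP : P.IsHomogeneous n) (A B : Fin 3 → ℂ) : (binaryRestrict P A B).IsHomogeneous n := by
  simpa [_root_.binaryRestrict] using
    hP.aeval _ fun i => (isHomogeneous_C_mul_X (A i) 0).add (isHomogeneous_C_mul_X (B i) 1)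

lemma linForm_dvd_of_binaryRestrict_eq_zero {A B v : Fin 3 → ℂ}
    (hAB : LinearIndependent ℂ ![A, B]) (hvA : v ⬝ᵥ A = 0) (hvB : v ⬝ᵥ B = 0) (hv : v ≠ 0)
    {g : MvPolynomial (Fin 3) ℂ} (hg : binaryRestrict g A B = 0) : linForm v ∣ g := by
  obtain ⟨M, N, hMN, -, hN, hres⟩ := exists_frame hAB hvA hvB hv
  obtain ⟨W, hW⟩ := X_zero_dvd_of_aeval_cons_zero ((hres g).symm.trans hg)
  refine ⟨linSubst N W, ?_⟩
  calc g = linSubst N (linSubst M g) := by rw [linSubst_linSubst, hMN, linSubst_one]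
    _ = linForm v * linSubst N W := by rw [hW, map_mul, linSubst_X, ← hN]; rfl

lemma exists_isHomogeneous_binaryRestrict_eq {A B v : Fin 3 → ℂ}
    (hAB : LinearIndependent ℂ ![A, B]) (hvA : v ⬝ᵥ A = 0) (hvB : v ⬝ᵥ B = 0) (hv : v ≠ 0)
    {H : MvPolynomial (Fin 2) ℂ} {n : ℕ} (hH : H.IsHomogeneous n) :
    ∃ h, h.IsHomogeneous n ∧ binaryRestrict h A B = H := by
  obtain ⟨M, N, -, hNM, -, hres⟩ := exists_frame hAB hvA hvB hv
  refine ⟨linSubst N (rename Fin.succ H), hH.rename_isHomogeneous.linSubst N, ?_⟩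
  rw [hres, linSubst_linSubst, hNM, linSubst_one, aeval_rename]
  exact aeval_X_left_apply H

lemma not_linForm_dvd_of_irreducible {P : MvPolynomial (Fin 3) ℂ} {r : ℕ}
    (hP : P.IsHomogeneous r) (hr : 2 ≤ r) (hirr : Irreducible P) {v : Fin 3 → ℂ} (hv : v ≠ 0) :
    ¬linForm v ∣ P := by
  rintro ⟨w, rfl⟩
  have hw : w.IsHomogeneous (r - 1) :=
    (isHomogeneous_linForm v).of_mul_left (linForm_ne_zero hv) hP
  rcases hirr.isUnit_or_isUnit rfl with h | h
  · exact (isHomogeneous_linForm v).not_isUnit one_ne_zero h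
  · exact hw.not_isUnit (by omega) h

lemma exists_decomposition_of_isUndulationLine {P : MvPolynomial (Fin 3) ℂ} {r : ℕ}
    (hP : P.IsHomogeneous r) (hr : 4 ≤ r) {v : Fin 3 → ℂ} (hund : IsUndulationLine P v) :
    ∃ (u : Fin 3 → ℂ) (h w : MvPolynomial (Fin 3) ℂ),
      h.IsHomogeneous (r - 4) ∧ w.IsHomogeneous (r - 1) ∧
      P = linForm u ^ 4 * h + linForm v * w := by
  obtain ⟨hv, A, B, hAB, hvA, hvB, L, hL0, hL, H, hQ⟩ := hund
  have hH : H.IsHomogeneous (r - 4) := by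
    simpa using (hL.pow 4).of_mul_left (pow_ne_zero 4 hL0) (hQ ▸ hP.binaryRestrict A B)
  obtain ⟨ℓ, hℓ, hℓL⟩ := exists_isHomogeneous_binaryRestrict_eq hAB hvA hvB hv hL
  obtain ⟨h, hh, hhH⟩ := exists_isHomogeneous_binaryRestrict_eq hAB hvA hvB hv hH
  obtain ⟨w, hw⟩ : linForm v ∣ P - ℓ ^ 4 * h := by
    refine linForm_dvd_of_binaryRestrict_eq_zero hAB hvA hvB hv ?_
    simp only [binaryRestrict, map_sub, map_mul, map_pow] at hQ hℓL hhH ⊢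
    rw [hQ, hℓL, hhH, sub_self]
  have hℓh : (ℓ ^ 4 * h).IsHomogeneous r := by
    simpa [show 4 + (r - 4) = r by omega] using (hℓ.pow 4).mul hh
  refine ⟨fun i => ℓ.coeff (Finsupp.single i 1), h, w, hh, ?_, ?_⟩
  · exact (isHomogeneous_linForm v).of_mul_left (linForm_ne_zero hv) (hw ▸ hP.sub hℓh)
  · rw [← hw, show linForm _ = ℓ from hℓ.eq_sum_C_coeff_mul_X.symm]
    ring

lemma isUndulationLine_of_decomposition {P : MvPolynomial (Fin 3) ℂ} {r : ℕ}
    (hP : P.IsHomogeneous r) (hr : 2 ≤ r) (hirr : Irreducible P) {u v : Fin 3 → ℂ} (hv : v ≠ 0)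
    {h w : MvPolynomial (Fin 3) ℂ} (hPuv : P = linForm u ^ 4 * h + linForm v * w) :
    IsUndulationLine P v := by
  obtain ⟨A, B, hAB, hvA, hvB⟩ := exists_linearIndependent_pair_dotProduct_eq_zero hv
  have hv0 : binaryRestrict (linForm v) A B = 0 := by simp [binaryRestrict_linForm, hvA, hvB]
  have hres : binaryRestrict P A B = binaryRestrict (linForm u) A B ^ 4 * binaryRestrict h A B := by
    simp only [hPuv, binaryRestrict, map_add, map_mul, map_pow] at hv0 ⊢
    rw [hv0, zero_mul, add_zero]
  refine ⟨hv, A, B, hAB, hvA, hvB, _, fun hL0 => ?_, (isHomogeneous_linForm u).binaryRestrict A B,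
    Dvd.intro _ hres.symm⟩
  refine not_linForm_dvd_of_irreducible hP hr hirr hv ?_
  exact linForm_dvd_of_binaryRestrict_eq_zero hAB hvA hvB hv (by rw [hres, hL0]; ring)

/-- Lemma 3.1. For `r ≥ 4`, an irreducible homogeneous `P` of degree `r`
and a nonzero linear form `v`, `v = 0` is an undulation line of `P = 0` iff
`P = u⁴·h + v·w` for some linear form `u` and homogeneous `h, w` of degrees `r-4`, `r-1`. -/
theorem undulation_line_iff_decomposition
    (r : ℕ) (hr : 4 ≤ r) (P : MvPolynomial (Fin 3) ℂ)
    (hP : P.IsHomogeneous r) (hirr : Irreducible P)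
    (v : Fin 3 → ℂ) (hv : v ≠ 0) :
    IsUndulationLine P v ↔
      ∃ (u : Fin 3 → ℂ) (h w : MvPolynomial (Fin 3) ℂ),
        h.IsHomogeneous (r - 4) ∧ w.IsHomogeneous (r - 1) ∧
        P = linForm u ^ 4 * h + linForm v * w :=
  ⟨exists_decomposition_of_isUndulationLine hP hr, fun ⟨_, _, _, _, _, hPuv⟩ =>
    isUndulationLine_of_decomposition hP (by omega) hirr hv hPuv⟩
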